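/- arXiv:2412.09080 — 5 statements merged into one kernel-verified Lean document; each statement's English description precedes it below -/
import Mathlib

section
/- Fix a real β > 0 and let g(x) = x·exp(−βx²/2). Then for all x ∈ ℝ, g'(x)·g'''(x) − (g''(x))² = −β·(β²x⁴ + 3)·exp(−βx²), which is strictly negative. Consequently, for every θ ∈ ℝ, every critical point x₀ of the function φ_θ := cos θ · g + sin θ · g' (i.e. every x₀ with φ_θ'(x₀) = 0) is non-degenerate: φ_θ''(x₀) ≠ 0. -/
/-! Critical points of `φ = c f + s f'` are zeros of `c f' + s f''`; at a degenerate one the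
vector `(c, s)` lies in the kernel of the symmetric matrix `[[f', f''], [f'', f''']]`, whose
determinant is the Wronskian `f' f''' - f''²`. For `g` this Wronskian is an explicit negative
multiple of `exp (-βx²)`. -/

open Real

/-- `g(x) = x·exp(−βx²/2)`. -/
noncomputable def gfun (β : ℝ) (x : ℝ) : ℝ := x * Real.exp (-β * x ^ 2 / 2)

theorem eq_zero_and_eq_zero_of_mul_add_mul_eq_zero {R : Type*} [CommRing R] [NoZeroDivisors R]
    {a b d c s : R} (hdet : a * d - b ^ 2 ≠ 0) (h₁ : c * a + s * b = 0)
    (h₂ : c * b + s * d = 0) : c = 0 ∧ s = 0 := by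
  have hc : c * (a * d - b ^ 2) = 0 := by linear_combination d * h₁ - b * h₂
  have hs : s * (a * d - b ^ 2) = 0 := by linear_combination a * h₂ - b * h₁
  exact ⟨(mul_eq_zero.1 hc).resolve_right hdet, (mul_eq_zero.1 hs).resolve_right hdet⟩

theorem deriv_const_mul_add_const_mul {u v : ℝ → ℝ} {x : ℝ} (c s : ℝ)
    (hu : DifferentiableAt ℝ u x) (hv : DifferentiableAt ℝ v x) :
    deriv (fun y => c * u y + s * v y) x = c * deriv u x + s * deriv v x :=
  ((hu.hasDerivAt.const_mul c).add (hv.hasDerivAt.const_mul s)).deriv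

theorem deriv_deriv_ne_zero_of_deriv_eq_zero {f : ℝ → ℝ} (hf : ContDiff ℝ 3 f) {c s x : ℝ}
    (hcs : c ≠ 0 ∨ s ≠ 0)
    (hW : deriv f x * deriv (deriv (deriv f)) x - deriv (deriv f) x ^ 2 ≠ 0)
    (hcrit : deriv (fun y => c * f y + s * deriv f y) x = 0) :
    deriv (deriv (fun y => c * f y + s * deriv f y)) x ≠ 0 := by
  have hf₀ : Differentiable ℝ f := hf.differentiable (by norm_num)
  have hf₁ : Differentiable ℝ (deriv f) := (hf.iterate_deriv' 2 1).differentiable (by norm_num)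
  have hf₂ : Differentiable ℝ (deriv (deriv f)) :=
    (hf.iterate_deriv' 1 2).differentiable (by norm_num)
  have hφ' : deriv (fun y => c * f y + s * deriv f y) =
      fun y => c * deriv f y + s * deriv (deriv f) y :=
    funext fun y => deriv_const_mul_add_const_mul c s (hf₀ y) (hf₁ y)
  rw [hφ'] at hcrit ⊢
  rw [deriv_const_mul_add_const_mul c s (hf₁ x) (hf₂ x)]
  intro hcrit₂
  obtain ⟨hc, hs⟩ := eq_zero_and_eq_zero_of_mul_add_mul_eq_zero hW hcrit hcrit₂
  exact hcs.elim (· hc) (· hs)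

theorem hasDerivAt_mul_exp_neg_mul_sq_div_two {u : ℝ → ℝ} {u' x : ℝ} (β : ℝ)
    (hu : HasDerivAt u u' x) :
    HasDerivAt (fun y => u y * exp (-β * y ^ 2 / 2))
      ((u' - β * x * u x) * exp (-β * x ^ 2 / 2)) x := by
  have hexp : HasDerivAt (fun y => exp (-β * y ^ 2 / 2)) (exp (-β * x ^ 2 / 2) * (-β * x)) x := by
    refine (((hasDerivAt_pow 2 x).const_mul (-β)).div_const 2).exp.congr_deriv ?_
    ring
  exact (hu.mul hexp).congr_deriv (by ring)

theorem deriv_gfun (β : ℝ) :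
    deriv (gfun β) = fun x => (1 - β * x ^ 2) * exp (-β * x ^ 2 / 2) := by
  ext x
  exact (hasDerivAt_mul_exp_neg_mul_sq_div_two β (hasDerivAt_id' x)).deriv.trans (by ring)

theorem deriv_deriv_gfun (β : ℝ) :
    deriv (deriv (gfun β)) = fun x => β * x * (β * x ^ 2 - 3) * exp (-β * x ^ 2 / 2) := by
  ext x
  have hp : HasDerivAt (fun y => 1 - β * y ^ 2) (-(β * (2 * x ^ 1))) x :=
    ((hasDerivAt_pow 2 x).const_mul β).const_sub 1
  rw [deriv_gfun]
  exact (hasDerivAt_mul_exp_neg_mul_sq_div_two β hp).deriv.trans (by ring)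

theorem deriv_deriv_deriv_gfun (β : ℝ) :
    deriv (deriv (deriv (gfun β))) =
      fun x => β * (-β ^ 2 * x ^ 4 + 6 * β * x ^ 2 - 3) * exp (-β * x ^ 2 / 2) := by
  ext x
  have hp : HasDerivAt (fun y => β * y * (β * y ^ 2 - 3))
      (β * 1 * (β * x ^ 2 - 3) + β * x * (β * (2 * x ^ 1))) x :=
    ((hasDerivAt_id' x).const_mul β).mul (((hasDerivAt_pow 2 x).const_mul β).sub_const 3)
  rw [deriv_deriv_gfun]
  exact (hasDerivAt_mul_exp_neg_mul_sq_div_two β hp).deriv.trans (by ring)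

theorem gfun_wronskian (β x : ℝ) :
    deriv (gfun β) x * deriv (deriv (deriv (gfun β))) x - deriv (deriv (gfun β)) x ^ 2 =
      -β * (β ^ 2 * x ^ 4 + 3) * exp (-β * x ^ 2) := by
  have hexp : exp (-β * x ^ 2 / 2) ^ 2 = exp (-β * x ^ 2) := by
    rw [← exp_nat_mul]; ring_nf
  rw [deriv_deriv_deriv_gfun, deriv_deriv_gfun, deriv_gfun]
  linear_combination (-β * (β ^ 2 * x ^ 4 + 3)) * hexp

theorem gfun_wronskian_neg {β : ℝ} (hβ : 0 < β) (x : ℝ) :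
    deriv (gfun β) x * deriv (deriv (deriv (gfun β))) x - deriv (deriv (gfun β)) x ^ 2 < 0 := by
  rw [gfun_wronskian, neg_mul, neg_mul, neg_lt_zero]
  positivity

theorem contDiff_gfun (β : ℝ) {n : WithTop ℕ∞} : ContDiff ℝ n (gfun β) := by
  unfold gfun
  fun_prop

theorem cos_ne_zero_or_sin_ne_zero (θ : ℝ) : cos θ ≠ 0 ∨ sin θ ≠ 0 := by
  by_contra! h
  simpa [h.1, h.2] using cos_sq_add_sin_sq θ

/-- For `g(x) = x·e^(−βx²/2)` one has
`g'·g''' − (g'')² = −β(β²x⁴+3)e^(−βx²) < 0` everywhere; consequently, for every `θ`,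
every critical point of `φ_θ = cos θ · g + sin θ · g'` is non-degenerate. -/
theorem wronskian_neg_and_nondegenerate_critical_points (β : ℝ) (hβ : 0 < β) :
    (∀ x : ℝ,
      deriv (gfun β) x * deriv (deriv (deriv (gfun β))) x -
          (deriv (deriv (gfun β)) x) ^ 2 =
        -β * (β ^ 2 * x ^ 4 + 3) * Real.exp (-β * x ^ 2)) ∧
    (∀ x : ℝ,
      deriv (gfun β) x * deriv (deriv (deriv (gfun β))) x -
          (deriv (deriv (gfun β)) x) ^ 2 < 0) ∧
    (∀ θ x₀ : ℝ,
      deriv (fun x => Real.cos θ * gfun β x + Real.sin θ * deriv (gfun β) x) x₀ = 0 →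
      deriv (deriv
        (fun x => Real.cos θ * gfun β x + Real.sin θ * deriv (gfun β) x)) x₀ ≠ 0) := by
  refine ⟨gfun_wronskian β, gfun_wronskian_neg hβ, fun θ x₀ hcrit => ?_⟩
  exact deriv_deriv_ne_zero_of_deriv_eq_zero (contDiff_gfun β) (cos_ne_zero_or_sin_ne_zero θ)
    (gfun_wronskian_neg hβ x₀).ne hcrit
end

section
/- For every real β > 0, every t ∈ ℝ, and X ~ N(0,1): E[(t − X)·(1 − β(t − X)²)·exp(−β(t − X)²)] = t·(1 + β − βt² − 2β²)·exp(−βt²/(2β+1))·(2β+1)^{−7/2}. -/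
/-!
Completing the square, `e^{-x²/2} e^{-β(t-x)²}` is `e^{-βt²/(2β+1)} (2β+1)^{-1/2}` times
`√(2π)` times the density of `N(2βt/(2β+1), 1/(2β+1))`. The expectation is therefore the integral
of the cubic `(t-x)(1-β(t-x)²)` against that Gaussian, which only needs its first three moments;
the third one follows from the symmetry `x ↦ 2μ - x` of `N(μ, v)`.
-/

open MeasureTheory ProbabilityTheory Real
open scoped NNReal

namespace ProbabilityTheory

variable {μ : ℝ} {v : ℝ≥0}

lemma integrable_pow_gaussianReal (n : ℕ) : Integrable (fun x ↦ x ^ n) (gaussianReal μ v) :=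
  integrable_pow_of_mem_interior_integrableExpSet (X := id) (by simp) n

lemma integral_sq_gaussianReal : ∫ x, x ^ 2 ∂gaussianReal μ v = μ ^ 2 + v := by
  have h := variance_eq_sub (memLp_id_gaussianReal (μ := μ) (v := v) 2)
  rw [variance_id_gaussianReal] at h
  simp only [Pi.pow_apply, id] at h
  rw [integral_id_gaussianReal] at h
  linarith

lemma integral_cubic_gaussianReal (a b c d : ℝ) :
    ∫ x, a + b * x + c * x ^ 2 + d * x ^ 3 ∂gaussianReal μ v =
      a + b * μ + c * (μ ^ 2 + v) + d * ∫ x, x ^ 3 ∂gaussianReal μ v := by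
  have hint (k : ℕ) (e : ℝ) : Integrable (fun x ↦ e * x ^ k) (gaussianReal μ v) :=
    (integrable_pow_gaussianReal k).const_mul e
  have h1 : Integrable (fun x ↦ b * x) (gaussianReal μ v) := by simpa using hint 1 b
  have h01 : Integrable (fun x ↦ a + b * x) (gaussianReal μ v) := (integrable_const a).add h1
  have h012 : Integrable (fun x ↦ a + b * x + c * x ^ 2) (gaussianReal μ v) := h01.add (hint 2 c)
  rw [integral_add h012 (hint 3 d), integral_add h01 (hint 2 c),
    integral_add (integrable_const a) h1, integral_const, integral_const_mul,
    integral_const_mul, integral_const_mul,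
    integral_id_gaussianReal, integral_sq_gaussianReal]
  simp

lemma integral_pow_three_gaussianReal : ∫ x, x ^ 3 ∂gaussianReal μ v = μ ^ 3 + 3 * μ * v := by
  have h_symm : ∫ x, x ^ 3 ∂gaussianReal μ v = ∫ x, (2 * μ - x) ^ 3 ∂gaussianReal μ v := by
    conv_lhs => rw [← show 2 * μ - μ = μ by ring, ← gaussianReal_map_const_sub]
    exact integral_map (by fun_prop) (by fun_prop)
  have h_expand : ∀ x : ℝ, (2 * μ - x) ^ 3 =
      8 * μ ^ 3 + -12 * μ ^ 2 * x + 6 * μ * x ^ 2 + -1 * x ^ 3 := fun x ↦ by ring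
  simp only [h_expand, integral_cubic_gaussianReal] at h_symm
  linarith

lemma gaussianPDFReal_mul_exp_neg_mul_sub_sq {β : ℝ} (hβ : 0 < 2 * β + 1) (t x : ℝ) :
    gaussianPDFReal 0 1 x * exp (-β * (t - x) ^ 2) =
      exp (-β * t ^ 2 / (2 * β + 1)) / √(2 * β + 1) *
        gaussianPDFReal (2 * β * t / (2 * β + 1)) (2 * β + 1)⁻¹.toNNReal x := by
  set s := 2 * β + 1
  have h_sqrt : √(2 * π * s⁻¹) = √(2 * π) / √s := by
    rw [Real.sqrt_mul (by positivity), Real.sqrt_inv, div_eq_mul_inv]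
  have h_exponent : -(x - 0) ^ 2 / 2 + -β * (t - x) ^ 2 =
      -β * t ^ 2 / s + -(x - 2 * β * t / s) ^ 2 / (2 * s⁻¹) := by
    field_simp
    ring
  have hs : √s ≠ 0 := by positivity
  simp only [gaussianPDFReal_def, Real.coe_toNNReal _ (inv_pos.2 hβ).le, NNReal.coe_one,
    h_sqrt, mul_one]
  rw [mul_assoc, ← exp_add, h_exponent, exp_add]
  field_simp

lemma integral_mul_exp_neg_mul_sub_sq_gaussianReal {β : ℝ} (hβ : 0 < 2 * β + 1) (t : ℝ)
    (f : ℝ → ℝ) :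
    ∫ x, f x * exp (-β * (t - x) ^ 2) ∂gaussianReal 0 1 =
      exp (-β * t ^ 2 / (2 * β + 1)) / √(2 * β + 1) *
        ∫ x, f x ∂gaussianReal (2 * β * t / (2 * β + 1)) (2 * β + 1)⁻¹.toNNReal := by
  have hv : (2 * β + 1)⁻¹.toNNReal ≠ 0 := by simpa using hβ
  rw [integral_gaussianReal_eq_integral_smul one_ne_zero,
    integral_gaussianReal_eq_integral_smul hv, ← integral_const_mul]
  congr 1 with x
  rw [smul_eq_mul, smul_eq_mul, mul_left_comm, gaussianPDFReal_mul_exp_neg_mul_sub_sq hβ]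
  ring

end ProbabilityTheory

/-- Mixed second moment `E[G(t)·G'"'"'(t)]` for
`G(t) = (t−X)e^(−(β/2)(t−X)²)`, `G'"'"'(t) = (1−β(t−X)²)e^(−(β/2)(t−X)²)`,
`X ~ N(0,1)`. -/
theorem gaussian_kde_mixed_second_moment (β : ℝ) (hβ : 0 < β) (t : ℝ) :
    ∫ x, (t - x) * (1 - β * (t - x) ^ 2) * Real.exp (-β * (t - x) ^ 2)
        ∂(gaussianReal 0 1) =
      t * (1 + β - β * t ^ 2 - 2 * β ^ 2) * Real.exp (-β * t ^ 2 / (2 * β + 1)) *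
        (2 * β + 1) ^ (-(7 : ℝ) / 2) := by
  have hs : 0 < 2 * β + 1 := by linarith
  have h_cubic : ∀ x, (t - x) * (1 - β * (t - x) ^ 2) =
      (t - β * t ^ 3) + (3 * β * t ^ 2 - 1) * x + -(3 * β * t) * x ^ 2 + β * x ^ 3 :=
    fun x ↦ by ring
  have h_rpow : (2 * β + 1) ^ (-(7 : ℝ) / 2) = ((2 * β + 1) ^ 3 * √(2 * β + 1))⁻¹ := by
    rw [show -(7 : ℝ) / 2 = -((3 : ℕ) + 1 / 2) by norm_num, Real.rpow_neg hs.le,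
      Real.rpow_add hs, Real.rpow_natCast, ← Real.sqrt_eq_rpow]
  have h_sqrt : √(2 * β + 1) ≠ 0 := by positivity
  rw [integral_mul_exp_neg_mul_sub_sq_gaussianReal hs, funext h_cubic,
    integral_cubic_gaussianReal, integral_pow_three_gaussianReal,
    Real.coe_toNNReal _ (inv_pos.2 hs).le, h_rpow]
  field_simp
  ring
end

section
/- For every real β > 0, every t ∈ ℝ, and X ~ N(0,1): E[(1 − β(t − X)²)²·exp(−β(t − X)²)] = (12β⁴ + 4β³(t² + 5) + β²(t⁴ − 2t² + 15) − 2β(t² − 3) + 1)·exp(−βt²/(2β+1))·(2β+1)^{−9/2}. -/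
open MeasureTheory ProbabilityTheory Real
open scoped ENNReal BigOperators

private lemma myInt' {a : ℝ} (ha : 0 < a) (n : ℕ) :
    Integrable (fun x : ℝ => x ^ n * Real.exp (-a * x ^ 2)) := by
  have h := integrable_rpow_mul_exp_neg_mul_sq ha (s := (n : ℝ))
    (lt_of_lt_of_le (by norm_num) (Nat.cast_nonneg n))
  simpa [Real.rpow_natCast] using h

private lemma oddMoment' {a : ℝ} (n : ℕ) (hn : Odd n) :
    ∫ x : ℝ, x ^ n * Real.exp (-a * x ^ 2) = 0 := by
  have h := integral_neg_eq_self (fun x : ℝ => x ^ n * Real.exp (-a * x ^ 2)) volume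
  simp only [hn.neg_pow, neg_sq, neg_mul] at h
  rw [integral_neg] at h
  simp only [neg_mul]
  linarith

private lemma evenMoment' {a : ℝ} (ha : 0 < a) (k : ℕ) :
    ∫ x : ℝ, x ^ (2 * k) * Real.exp (-a * x ^ 2) =
      a ^ (-(2 * (k : ℝ) + 1) / 2) * Real.Gamma ((2 * k + 1) / 2) := by
  have h2 := integral_comp_abs (f := fun y : ℝ => y ^ (2 * k) * Real.exp (-a * y ^ 2))
  simp only [pow_mul, sq_abs] at h2
  rw [show (∫ x : ℝ, x ^ (2 * k) * Real.exp (-a * x ^ 2))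
      = ∫ x : ℝ, (x ^ 2) ^ k * Real.exp (-a * x ^ 2) by simp [pow_mul], h2]
  have : ∫ x in Set.Ioi (0:ℝ), (x ^ 2) ^ k * Real.exp (-a * x ^ 2)
      = ∫ x in Set.Ioi (0:ℝ), x ^ ((2 * k : ℕ) : ℝ) * Real.exp (-a * x ^ ((2:ℕ):ℝ)) := by
    refine setIntegral_congr_fun measurableSet_Ioi (fun x hx => ?_)
    rw [Real.rpow_natCast, Real.rpow_natCast, pow_mul]
  rw [this, integral_rpow_mul_exp_neg_mul_rpow (by norm_num)
    (lt_of_lt_of_le (by norm_num) (Nat.cast_nonneg _)) ha]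
  push_cast
  ring

private lemma gamma32 : Real.Gamma (3/2) = Real.sqrt π / 2 := by
  rw [show (3/2:ℝ) = 1/2 + 1 by norm_num, Real.Gamma_add_one (by norm_num),
    Real.Gamma_one_half_eq]
  ring

private lemma gamma52 : Real.Gamma (5/2) = 3 * Real.sqrt π / 4 := by
  rw [show (5/2:ℝ) = 3/2 + 1 by norm_num, Real.Gamma_add_one (by norm_num), gamma32]
  ring

private lemma m0' {a : ℝ} (ha : 0 < a) :
    ∫ x : ℝ, x ^ 0 * Real.exp (-a * x ^ 2) = Real.sqrt π * a ^ (-(1:ℝ)/2) := by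
  have h := evenMoment' ha 0
  norm_num [Real.Gamma_one_half_eq] at h
  simp only [pow_zero, one_mul]
  rw [show (-(1:ℝ)/2) = (-(1/2) : ℝ) by norm_num]
  rw [show (fun x : ℝ => Real.exp (-a * x ^ 2)) = fun x : ℝ => Real.exp (-(a * x ^ 2)) by
    funext x; rw [neg_mul], h]
  ring

private lemma m2' {a : ℝ} (ha : 0 < a) :
    ∫ x : ℝ, x ^ 2 * Real.exp (-a * x ^ 2) = Real.sqrt π / 2 * a ^ (-(3:ℝ)/2) := by
  have h := evenMoment' ha 1
  norm_num [gamma32] at h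
  rw [show (-(3:ℝ)/2) = (-(3/2) : ℝ) by norm_num]
  rw [show (fun x : ℝ => x ^ 2 * Real.exp (-a * x ^ 2))
    = fun x : ℝ => x ^ 2 * Real.exp (-(a * x ^ 2)) by funext x; rw [neg_mul], h]
  ring

private lemma m4' {a : ℝ} (ha : 0 < a) :
    ∫ x : ℝ, x ^ 4 * Real.exp (-a * x ^ 2) = 3 * Real.sqrt π / 4 * a ^ (-(5:ℝ)/2) := by
  have h := evenMoment' ha 2
  norm_num [gamma52] at h
  rw [show (-(5:ℝ)/2) = (-(5/2) : ℝ) by norm_num]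
  rw [show (fun x : ℝ => x ^ 4 * Real.exp (-a * x ^ 2))
    = fun x : ℝ => x ^ 4 * Real.exp (-(a * x ^ 2)) by funext x; rw [neg_mul], h]
  ring

private lemma rpow_split1 {a : ℝ} (ha : 0 < a) :
    a ^ (-(3:ℝ)/2) = a ^ (-(1:ℝ)/2) * a⁻¹ := by
  rw [← Real.rpow_neg_one a, ← Real.rpow_add ha]; norm_num

private lemma rpow_split2 {a : ℝ} (ha : 0 < a) :
    a ^ (-(5:ℝ)/2) = a ^ (-(1:ℝ)/2) * (a ^ 2)⁻¹ := by
  rw [show (-(5:ℝ)/2) = -(1:ℝ)/2 + ((-2 : ℤ) : ℝ) by norm_num, Real.rpow_add ha,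
    Real.rpow_intCast]
  congr 1

private lemma polyIntegral {a : ℝ} (ha : 0 < a) (c0 c1 c2 c3 c4 : ℝ) :
    ∫ x : ℝ, (c0 + c1 * x + c2 * x ^ 2 + c3 * x ^ 3 + c4 * x ^ 4) * Real.exp (-a * x ^ 2)
      = (c0 + c2 / (2 * a) + 3 * c4 / (4 * a ^ 2)) * (Real.sqrt π * a ^ (-(1:ℝ)/2)) := by
  have i0 : Integrable (fun x : ℝ => c0 * (x ^ 0 * Real.exp (-a * x ^ 2))) :=
    (myInt' ha 0).const_mul c0
  have i1 : Integrable (fun x : ℝ => c1 * (x ^ 1 * Real.exp (-a * x ^ 2))) :=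
    (myInt' ha 1).const_mul c1
  have i2 : Integrable (fun x : ℝ => c2 * (x ^ 2 * Real.exp (-a * x ^ 2))) :=
    (myInt' ha 2).const_mul c2
  have i3 : Integrable (fun x : ℝ => c3 * (x ^ 3 * Real.exp (-a * x ^ 2))) :=
    (myInt' ha 3).const_mul c3
  have i4 : Integrable (fun x : ℝ => c4 * (x ^ 4 * Real.exp (-a * x ^ 2))) :=
    (myInt' ha 4).const_mul c4
  have i34 : Integrable (fun x : ℝ => c3 * (x ^ 3 * Real.exp (-a * x ^ 2))
      + c4 * (x ^ 4 * Real.exp (-a * x ^ 2))) := i3.add i4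
  have i234 : Integrable (fun x : ℝ => c2 * (x ^ 2 * Real.exp (-a * x ^ 2))
      + (c3 * (x ^ 3 * Real.exp (-a * x ^ 2)) + c4 * (x ^ 4 * Real.exp (-a * x ^ 2)))) :=
    i2.add i34
  have i1234 : Integrable (fun x : ℝ => c1 * (x ^ 1 * Real.exp (-a * x ^ 2))
      + (c2 * (x ^ 2 * Real.exp (-a * x ^ 2)) + (c3 * (x ^ 3 * Real.exp (-a * x ^ 2))
      + c4 * (x ^ 4 * Real.exp (-a * x ^ 2))))) := i1.add i234
  have e : (fun x : ℝ => (c0 + c1 * x + c2 * x ^ 2 + c3 * x ^ 3 + c4 * x ^ 4)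
        * Real.exp (-a * x ^ 2))
      = fun x : ℝ => c0 * (x ^ 0 * Real.exp (-a * x ^ 2))
          + (c1 * (x ^ 1 * Real.exp (-a * x ^ 2))
          + (c2 * (x ^ 2 * Real.exp (-a * x ^ 2))
          + (c3 * (x ^ 3 * Real.exp (-a * x ^ 2))
          + c4 * (x ^ 4 * Real.exp (-a * x ^ 2))))) := by
    funext x; ring
  rw [e, integral_add i0 i1234, integral_add i1 i234, integral_add i2 i34,
    integral_add i3 i4, integral_const_mul, integral_const_mul, integral_const_mul,
    integral_const_mul, integral_const_mul, oddMoment' 1 odd_one, oddMoment' 3 (by decide),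
    m0' ha, m2' ha, m4' ha, rpow_split1 ha, rpow_split2 ha]
  field_simp
  ring

set_option maxHeartbeats 2000000

/-- Second moment `E[G'"'"'(t)²]` for
`G'"'"'(t) = (1−β(t−X)²)e^(−(β/2)(t−X)²)`, `X ~ N(0,1)`. -/
theorem gaussian_kde_second_moment_G' (β : ℝ) (hβ : 0 < β) (t : ℝ) :
    ∫ x, (1 - β * (t - x) ^ 2) ^ 2 * Real.exp (-β * (t - x) ^ 2) ∂(gaussianReal 0 1) =
      (12 * β ^ 4 + 4 * β ^ 3 * (t ^ 2 + 5) + β ^ 2 * (t ^ 4 - 2 * t ^ 2 + 15) -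
          2 * β * (t ^ 2 - 3) + 1) *
        Real.exp (-β * t ^ 2 / (2 * β + 1)) * (2 * β + 1) ^ (-(9 : ℝ) / 2) := by
  have hc : (0:ℝ) < 2 * β + 1 := by linarith
  have hcne : (2 * β + 1 : ℝ) ≠ 0 := hc.ne'
  have ha : (0:ℝ) < (2 * β + 1) / 2 := by linarith
  -- step 1: density
  rw [gaussianReal_of_var_ne_zero 0 one_ne_zero]
  have hd : (gaussianPDF 0 1) = fun x => ((gaussianPDFReal 0 1 x).toNNReal : ENNReal) := rfl
  rw [hd, integral_withDensity_eq_integral_smul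
    ((measurable_gaussianPDFReal 0 1).real_toNNReal)]
  have hpdf : ∀ x : ℝ, (gaussianPDFReal 0 1 x).toNNReal
      • ((1 - β * (t - x) ^ 2) ^ 2 * Real.exp (-β * (t - x) ^ 2))
      = (Real.sqrt (2 * π))⁻¹ * Real.exp (-x ^ 2 / 2)
        * ((1 - β * (t - x) ^ 2) ^ 2 * Real.exp (-β * (t - x) ^ 2)) := by
    intro x
    rw [NNReal.smul_def, smul_eq_mul, Real.coe_toNNReal _ (gaussianPDFReal_nonneg 0 1 x)]
    congr 2
    simp [gaussianPDFReal]
  simp only [hpdf]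
  -- step 2: shift by μ = 2βt/(2β+1)
  rw [← integral_add_right_eq_self (fun x => (Real.sqrt (2 * π))⁻¹ * Real.exp (-x ^ 2 / 2)
    * ((1 - β * (t - x) ^ 2) ^ 2 * Real.exp (-β * (t - x) ^ 2))) (2 * β * t / (2 * β + 1))]
  -- step 3: pointwise rewrite
  have hpt : ∀ x : ℝ, (Real.sqrt (2 * π))⁻¹
        * Real.exp (-(x + 2 * β * t / (2 * β + 1)) ^ 2 / 2)
        * ((1 - β * (t - (x + 2 * β * t / (2 * β + 1))) ^ 2) ^ 2
          * Real.exp (-β * (t - (x + 2 * β * t / (2 * β + 1))) ^ 2))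
      = ((Real.sqrt (2 * π))⁻¹ * Real.exp (-β * t ^ 2 / (2 * β + 1)))
        * (((1 - 2 * β * (t / (2 * β + 1)) ^ 2 + β ^ 2 * (t / (2 * β + 1)) ^ 4)
            + (4 * β * (t / (2 * β + 1)) - 4 * β ^ 2 * (t / (2 * β + 1)) ^ 3) * x
            + (-2 * β + 6 * β ^ 2 * (t / (2 * β + 1)) ^ 2) * x ^ 2
            + (-4 * β ^ 2 * (t / (2 * β + 1))) * x ^ 3
            + β ^ 2 * x ^ 4)
           * Real.exp (-((2 * β + 1) / 2) * x ^ 2)) := by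
    intro x
    have hexp : Real.exp (-(x + 2 * β * t / (2 * β + 1)) ^ 2 / 2)
        * Real.exp (-β * (t - (x + 2 * β * t / (2 * β + 1))) ^ 2)
        = Real.exp (-β * t ^ 2 / (2 * β + 1)) * Real.exp (-((2 * β + 1) / 2) * x ^ 2) := by
      rw [← Real.exp_add, ← Real.exp_add]
      congr 1
      field_simp
      ring
    have hpoly : (1 - β * (t - (x + 2 * β * t / (2 * β + 1))) ^ 2) ^ 2
        = (1 - 2 * β * (t / (2 * β + 1)) ^ 2 + β ^ 2 * (t / (2 * β + 1)) ^ 4)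
            + (4 * β * (t / (2 * β + 1)) - 4 * β ^ 2 * (t / (2 * β + 1)) ^ 3) * x
            + (-2 * β + 6 * β ^ 2 * (t / (2 * β + 1)) ^ 2) * x ^ 2
            + (-4 * β ^ 2 * (t / (2 * β + 1))) * x ^ 3
            + β ^ 2 * x ^ 4 := by
      field_simp
      ring
    rw [← hpoly]
    calc (Real.sqrt (2 * π))⁻¹ * Real.exp (-(x + 2 * β * t / (2 * β + 1)) ^ 2 / 2)
        * ((1 - β * (t - (x + 2 * β * t / (2 * β + 1))) ^ 2) ^ 2
          * Real.exp (-β * (t - (x + 2 * β * t / (2 * β + 1))) ^ 2))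
        = (Real.sqrt (2 * π))⁻¹ * ((1 - β * (t - (x + 2 * β * t / (2 * β + 1))) ^ 2) ^ 2
          * (Real.exp (-(x + 2 * β * t / (2 * β + 1)) ^ 2 / 2)
            * Real.exp (-β * (t - (x + 2 * β * t / (2 * β + 1))) ^ 2))) := by ring
      _ = _ := by rw [hexp]; ring
  simp only [hpt]
  rw [integral_const_mul, polyIntegral ha]
  -- step 4: final algebra
  have hM : (1 - 2 * β * (t / (2 * β + 1)) ^ 2 + β ^ 2 * (t / (2 * β + 1)) ^ 4)
        + (-2 * β + 6 * β ^ 2 * (t / (2 * β + 1)) ^ 2) / (2 * ((2 * β + 1) / 2))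
        + 3 * β ^ 2 / (4 * ((2 * β + 1) / 2) ^ 2)
      = (12 * β ^ 4 + 4 * β ^ 3 * (t ^ 2 + 5) + β ^ 2 * (t ^ 4 - 2 * t ^ 2 + 15) -
          2 * β * (t ^ 2 - 3) + 1) * ((2 * β + 1) ^ 4)⁻¹ := by
    field_simp
    ring
  have ha12 : ((2 * β + 1) / 2 : ℝ) ^ (-(1:ℝ)/2)
      = (2 * β + 1) ^ (-(1:ℝ)/2) * 2 ^ ((1:ℝ)/2) := by
    rw [div_eq_mul_inv, Real.mul_rpow hc.le (by norm_num),
      Real.inv_rpow (by norm_num : (0:ℝ) ≤ 2), ← Real.rpow_neg (by norm_num : (0:ℝ) ≤ 2)]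
    norm_num
  have key : (Real.sqrt (2 * π))⁻¹
      * (Real.sqrt π * ((2 * β + 1) ^ (-(1:ℝ)/2) * 2 ^ ((1:ℝ)/2)))
      = (2 * β + 1) ^ (-(1:ℝ)/2) := by
    rw [Real.sqrt_mul (by norm_num : (0:ℝ) ≤ 2), ← Real.sqrt_eq_rpow]
    have h2 : (0:ℝ) < Real.sqrt 2 := Real.sqrt_pos.mpr (by norm_num)
    have hp : (0:ℝ) < Real.sqrt π := Real.sqrt_pos.mpr Real.pi_pos
    field_simp
  have key2 : ((2 * β + 1 : ℝ)) ^ (-(9:ℝ)/2)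
      = (2 * β + 1) ^ (-(1:ℝ)/2) * ((2 * β + 1) ^ 4)⁻¹ := by
    rw [show (-(9:ℝ)/2) = -(1:ℝ)/2 + ((-4 : ℤ) : ℝ) by norm_num, Real.rpow_add hc,
      Real.rpow_intCast]
    congr 1
  rw [hM, ha12, key2]
  linear_combination (Real.exp (-β * t ^ 2 / (2 * β + 1)) *
    ((12 * β ^ 4 + 4 * β ^ 3 * (t ^ 2 + 5) + β ^ 2 * (t ^ 4 - 2 * t ^ 2 + 15) -
      2 * β * (t ^ 2 - 3) + 1) * ((2 * β + 1) ^ 4)⁻¹)) * key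
end

section
/- Fix a constant C > 0, a constant c ∈ (0,1), and a function ω : (0,∞) → ℝ with ω(β) → ∞ and ω(β)/log log β → 0 as β → ∞. Then there exist constants c₁, c₂ > 0 and N ∈ ℕ such that for every integer n ≥ N and every real β with n^c ≤ β ≤ n^{2−c}: c₁·√(log β) ≤ ∫_T exp(−C·n·β^{−3/2}·t²·e^{−t²/2}) dt ≤ c₂·√(log β). -/
open MeasureTheory Real Set Filter
open scoped BigOperators

/-!
The integrand lies in `(0, 1]`, so the integral is at most the length
`2 √(2 log n - log β - ω β) ≤ 2 √(2 / c) √(log β)` of the interval. Conversely, once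
`t ^ 2 ≥ 2 log n - 2 log β` we have `n e^{-t²/2} ≤ β`, so the exponent is at most
`C t ^ 2 / √β ≤ 2 C log n / n ^ (c / 2) → 0` and the integrand is at least `1 / 2`; because
`ω β = o(log β)`, these `t` fill an interval of length `≳ √(log β)`.
-/

open Asymptotics

theorem isLittleO_log_of_tendsto_div_log_log {ω : ℝ → ℝ}
    (h : Tendsto (fun x => ω x / log (log x)) atTop (nhds 0)) : ω =o[atTop] log := by
  have hne : ∀ᶠ x : ℝ in atTop, log (log x) ≠ 0 :=
    (tendsto_log_atTop.comp tendsto_log_atTop).eventually_ne_atTop 0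
  exact (isLittleO_of_tendsto' (hne.mono fun x hx h0 => absurd h0 hx) h).trans
    (isLittleO_log_id_atTop.comp_tendsto tendsto_log_atTop)

theorem eventually_mul_log_le_sqrt_rpow (K : ℝ) {c : ℝ} (hc : 0 < c) :
    ∀ᶠ x : ℝ in atTop, K * log x ≤ √(x ^ c) := by
  filter_upwards [((isLittleO_log_rpow_atTop (half_pos hc)).const_mul_left K).bound one_pos,
    eventually_ge_atTop 0] with x hx hx0
  rw [sqrt_eq_rpow, ← rpow_mul hx0, mul_one_div]
  rw [one_mul, norm_eq_abs, norm_of_nonneg (rpow_nonneg hx0 _)] at hx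
  exact (le_abs_self _).trans hx

theorem setIntegral_Icc_le_of_norm_le {g : ℝ → ℝ} {a b M : ℝ} (hab : a ≤ b)
    (hg : ∀ t ∈ Icc a b, ‖g t‖ ≤ M) : ∫ t in Icc a b, g t ≤ M * (b - a) := by
  rw [← volume_real_Icc_of_le hab]
  exact (le_norm_self _).trans (norm_setIntegral_le_of_norm_le_const measure_Icc_lt_top hg)

theorem mul_sub_le_setIntegral_Icc {g : ℝ → ℝ} {a' a b m : ℝ}
    (hg : IntegrableOn g (Icc a' b)) (hg₀ : ∀ t ∈ Icc a' b, 0 ≤ g t) (ha : a' ≤ a) (hab : a ≤ b)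
    (hm : ∀ t ∈ Icc a b, m ≤ g t) : m * (b - a) ≤ ∫ t in Icc a' b, g t := by
  have hsub : Icc a b ⊆ Icc a' b := Icc_subset_Icc ha le_rfl
  calc m * (b - a) = m * volume.real (Icc a b) := by rw [volume_real_Icc_of_le hab]
    _ ≤ ∫ t in Icc a b, g t :=
      setIntegral_ge_of_const_le_real measurableSet_Icc measure_Icc_lt_top.ne hm (hg.mono_set hsub)
    _ ≤ ∫ t in Icc a' b, g t :=
      setIntegral_mono_set hg ((ae_restrict_iff' measurableSet_Icc).2 (.of_forall hg₀))
        hsub.eventuallyLE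

theorem exp_neg_sq_half_le_div {n β t : ℝ} (hn : 0 < n) (hβ : 0 < β)
    (ht : 2 * log n - 2 * log β ≤ t ^ 2) : exp (-t ^ 2 / 2) ≤ β / n :=
  calc exp (-t ^ 2 / 2) ≤ exp (log β - log n) := exp_le_exp.2 (by linarith)
    _ = β / n := by rw [exp_sub, exp_log hβ, exp_log hn]

theorem mul_rpow_mul_exp_neg_sq_half_le {n β t : ℝ} (hn : 0 < n) (hβ : 0 < β)
    (ht : 2 * log n - 2 * log β ≤ t ^ 2) :
    n * β ^ (-(3 : ℝ) / 2) * exp (-t ^ 2 / 2) ≤ (√β)⁻¹ :=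
  calc n * β ^ (-(3 : ℝ) / 2) * exp (-t ^ 2 / 2) ≤ n * β ^ (-(3 : ℝ) / 2) * (β / n) := by
        gcongr; exact exp_neg_sq_half_le_div hn hβ ht
    _ = β ^ (-(3 : ℝ) / 2 + 1) := by rw [rpow_add_one hβ.ne']; field_simp
    _ = (√β)⁻¹ := by rw [sqrt_eq_rpow, ← rpow_neg hβ.le]; norm_num

theorem half_le_exp_of_sq_bounds {C c n β t : ℝ} (hC : 0 ≤ C) (hn : 0 < n) (hβ : n ^ c ≤ β)
    (hsmall : 2 * C / log 2 * log n ≤ √(n ^ c)) (ht₁ : 2 * log n - 2 * log β ≤ t ^ 2)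
    (ht₂ : t ^ 2 ≤ 2 * log n) :
    1 / 2 ≤ exp (-C * n * β ^ (-(3 : ℝ) / 2) * t ^ 2 * exp (-t ^ 2 / 2)) := by
  have hβ₀ : 0 < β := (rpow_pos_of_pos hn c).trans_le hβ
  have hsmall' : C * (2 * log n) ≤ log 2 * √β := by
    rw [div_mul_eq_mul_div, div_le_iff₀ (log_pos one_lt_two)] at hsmall
    nlinarith [sqrt_le_sqrt hβ, log_pos one_lt_two]
  have hexp : C * n * β ^ (-(3 : ℝ) / 2) * t ^ 2 * exp (-t ^ 2 / 2) ≤ log 2 :=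
    calc C * n * β ^ (-(3 : ℝ) / 2) * t ^ 2 * exp (-t ^ 2 / 2)
        = C * t ^ 2 * (n * β ^ (-(3 : ℝ) / 2) * exp (-t ^ 2 / 2)) := by ring
      _ ≤ C * (2 * log n) * (√β)⁻¹ := by
        gcongr
        · nlinarith [sq_nonneg t]
        · exact mul_rpow_mul_exp_neg_sq_half_le hn hβ₀ ht₁
      _ ≤ log 2 := by rwa [← div_eq_mul_inv, div_le_iff₀ (sqrt_pos.2 hβ₀)]
  calc (1 : ℝ) / 2 = exp (-log 2) := by rw [exp_neg, exp_log two_pos, one_div]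
    _ ≤ _ := exp_le_exp.2 (by linarith)

theorem sqrt_two_log_sub_le {c n β w : ℝ} (hc : 0 < c) (hn : 0 < n) (hβ : n ^ c ≤ β)
    (hw : -log β ≤ w) : √(2 * log n - log β - w) ≤ √(2 / c) * √(log β) := by
  have hlog : c * log n ≤ log β := by
    rw [← log_rpow hn]; exact log_le_log (rpow_pos_of_pos hn c) hβ
  rw [← sqrt_mul (by positivity)]
  refine sqrt_le_sqrt ?_
  rw [div_mul_eq_mul_div, le_div_iff₀ hc]
  nlinarith

theorem div_mul_sqrt_le_sub_of_le_sq_sub_sq {a b d K L : ℝ} (hab : a ≤ b) (hb : b ≤ K * √L)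
    (hK : 0 < K) (hL : 0 < L) (hd : d * L ≤ b ^ 2 - a ^ 2) : d / (2 * K) * √L ≤ b - a := by
  have hsL : 0 < √L := sqrt_pos.2 hL
  have hprod : d * √L * √L ≤ (b - a) * (2 * K) * √L := by
    rw [mul_assoc, mul_self_sqrt hL.le]
    nlinarith [mul_le_mul_of_nonneg_left (show a + b ≤ 2 * (K * √L) by linarith)
      (sub_nonneg.2 hab)]
  rw [div_mul_eq_mul_div, div_le_iff₀ (by positivity)]
  exact le_of_mul_le_mul_right hprod hsL

section Window

variable {C c n β w : ℝ}

theorem setIntegral_exp_le (hC : 0 ≤ C) (hc : 0 < c) (hc₁ : c ≤ 1) (hn : 0 < n)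
    (hβ : n ^ c ≤ β) (hw : |w| ≤ c / 4 * log β) :
    ∫ t in Icc (-√(2 * log n - log β - w)) √(2 * log n - log β - w),
        exp (-C * n * β ^ (-(3 : ℝ) / 2) * t ^ 2 * exp (-t ^ 2 / 2)) ≤
      2 * √(2 / c) * √(log β) := by
  set b := √(2 * log n - log β - w)
  have hb : b ≤ √(2 / c) * √(log β) :=
    sqrt_two_log_sub_le hc hn hβ (by nlinarith [neg_abs_le w, abs_nonneg w])
  have hbound : ∀ t ∈ Icc (-b) b,
      ‖exp (-C * n * β ^ (-(3 : ℝ) / 2) * t ^ 2 * exp (-t ^ 2 / 2))‖ ≤ 1 := by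
    intro t _
    rw [norm_of_nonneg (exp_pos _).le, exp_le_one_iff, neg_mul, neg_mul, neg_mul, neg_mul,
      neg_nonpos]
    have := rpow_pos_of_pos ((rpow_pos_of_pos hn c).trans_le hβ) (-(3 : ℝ) / 2)
    positivity
  have hb₀ : 0 ≤ b := sqrt_nonneg _
  calc _ ≤ 1 * (b - -b) := setIntegral_Icc_le_of_norm_le (by linarith) hbound
    _ ≤ 2 * √(2 / c) * √(log β) := by linarith

theorem le_setIntegral_exp (hC : 0 ≤ C) (hc : 0 < c) (hc₁ : c ≤ 1) (hn : 1 < n)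
    (hβ₁ : n ^ c ≤ β) (hβ₂ : β ≤ n ^ (2 - c)) (hw : |w| ≤ c / 4 * log β)
    (hsmall : 2 * C / log 2 * log n ≤ √(n ^ c)) :
    c / (16 * √(2 / c)) * √(log β) ≤
      ∫ t in Icc (-√(2 * log n - log β - w)) √(2 * log n - log β - w),
        exp (-C * n * β ^ (-(3 : ℝ) / 2) * t ^ 2 * exp (-t ^ 2 / 2)) := by
  have hn₀ : 0 < n := one_pos.trans hn
  have hβ₀ : 0 < β := (rpow_pos_of_pos hn₀ c).trans_le hβ₁
  have hlog₁ : c * log n ≤ log β := by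
    rw [← log_rpow hn₀]; exact log_le_log (rpow_pos_of_pos hn₀ c) hβ₁
  have hlog₂ : log β ≤ (2 - c) * log n := by
    rw [← log_rpow hn₀]; exact log_le_log hβ₀ hβ₂
  have hlogn := log_pos hn
  have hL : 0 < log β := (mul_pos hc hlogn).trans_le hlog₁
  obtain ⟨hw₁, hw₂⟩ := abs_le.1 hw
  -- past `a`, `exp (-t ^ 2 / 2) ≤ β / n` and the integrand is at least `1 / 2`
  set a := √(2 * log n - 2 * log β)
  set b := √(2 * log n - log β - w)
  have hb2 : b ^ 2 = 2 * log n - log β - w := sq_sqrt (by nlinarith)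
  have hwidth : c / 4 * log β ≤ b ^ 2 - a ^ 2 := by
    rw [hb2, sq_sqrt', max_def]; split_ifs <;> nlinarith
  have hab : a ≤ b := (pow_le_pow_iff_left₀ (sqrt_nonneg _) (sqrt_nonneg _) two_ne_zero).1
    (by nlinarith)
  have hhalf : ∀ t ∈ Icc a b,
      1 / 2 ≤ exp (-C * n * β ^ (-(3 : ℝ) / 2) * t ^ 2 * exp (-t ^ 2 / 2)) := by
    rintro t ⟨hat, htb⟩
    have ha0 : 0 ≤ a := sqrt_nonneg _
    refine half_le_exp_of_sq_bounds hC hn₀ hβ₁ hsmall ?_ ?_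
    · exact (sqrt_le_iff.1 hat).2
    · nlinarith
  have hba := div_mul_sqrt_le_sub_of_le_sq_sub_sq hab
    (sqrt_two_log_sub_le hc hn₀ hβ₁ (by nlinarith)) (by positivity) hL hwidth
  calc c / (16 * √(2 / c)) * √(log β) = 1 / 2 * (c / 4 / (2 * √(2 / c)) * √(log β)) := by
        field_simp; ring
    _ ≤ 1 / 2 * (b - a) := by gcongr
    _ ≤ _ := mul_sub_le_setIntegral_Icc (Continuous.integrableOn_Icc (by fun_prop)) (fun t _ => (exp_pos _).le)
        (by linarith [sqrt_nonneg (2 * log n - 2 * log β)]) hab hhalf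

end Window

theorem integral_exp_At_over_T_general (C : ℝ) (hC : 0 < C) (c : ℝ) (hc0 : 0 < c)
    (hc1 : c < 1) (ω : ℝ → ℝ)
    (hω₂ : Tendsto (fun β => ω β / Real.log (Real.log β)) atTop (nhds 0)) :
    ∃ c₁ > (0 : ℝ), ∃ c₂ > (0 : ℝ), ∃ N : ℕ, ∀ n : ℕ, N ≤ n → ∀ β : ℝ,
      (n : ℝ) ^ c ≤ β → β ≤ (n : ℝ) ^ (2 - c) →
      c₁ * Real.sqrt (Real.log β) ≤
          (∫ t in Set.Icc (-(Real.sqrt (2 * Real.log n - Real.log β - ω β)))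
              (Real.sqrt (2 * Real.log n - Real.log β - ω β)),
            Real.exp (-C * n * β ^ (-(3 : ℝ) / 2) * t ^ 2 * Real.exp (-t ^ 2 / 2))) ∧
      (∫ t in Set.Icc (-(Real.sqrt (2 * Real.log n - Real.log β - ω β)))
          (Real.sqrt (2 * Real.log n - Real.log β - ω β)),
        Real.exp (-C * n * β ^ (-(3 : ℝ) / 2) * t ^ 2 * Real.exp (-t ^ 2 / 2))) ≤
        c₂ * Real.sqrt (Real.log β) := by
  obtain ⟨M, hM⟩ := eventually_atTop.1 <|
    ((isLittleO_log_of_tendsto_div_log_log hω₂).bound (by positivity : 0 < c / 4)).and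
      (tendsto_log_atTop.eventually_ge_atTop 0)
  obtain ⟨N, hN⟩ := eventually_atTop.1 <| tendsto_natCast_atTop_atTop.eventually <|
    (eventually_gt_atTop 1).and <| ((tendsto_rpow_atTop hc0).eventually_ge_atTop M).and
      (eventually_mul_log_le_sqrt_rpow (2 * C / log 2) hc0)
  refine ⟨c / (16 * √(2 / c)), by positivity, 2 * √(2 / c), by positivity, N,
    fun n hn β hβ₁ hβ₂ => ?_⟩
  obtain ⟨hn₁, hnM, hsmall⟩ := hN n hn
  obtain ⟨hω, hlogβ⟩ := hM β (hnM.trans hβ₁)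
  rw [norm_eq_abs, norm_of_nonneg hlogβ] at hω
  exact ⟨le_setIntegral_exp hC.le hc0 hc1.le hn₁ hβ₁ hβ₂ hω hsmall,
    setIntegral_exp_le hC.le hc0 hc1.le (one_pos.trans hn₁) hβ₁ hω⟩

/-- For fixed `C > 0`, `c ∈ (0,1)` and `ω` with `ω(β) → ∞`,
`ω(β)/log log β → 0`, there are `c₁, c₂ > 0` and `N` such that for all `n ≥ N` and
`n^c ≤ β ≤ n^(2−c)`, the integral `∫_T exp(−C·n·β^(−3/2)·t²·e^(−t²/2)) dt` over
`T = [−√(2 log n − log β − ω β), √(2 log n − log β − ω β)]` is of order `√(log β)`. -/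
theorem integral_exp_At_over_T (C : ℝ) (hC : 0 < C) (c : ℝ) (hc0 : 0 < c)
    (hc1 : c < 1) (ω : ℝ → ℝ) (hω₁ : Tendsto ω atTop atTop)
    (hω₂ : Tendsto (fun β => ω β / Real.log (Real.log β)) atTop (nhds 0)) :
    ∃ c₁ > (0 : ℝ), ∃ c₂ > (0 : ℝ), ∃ N : ℕ, ∀ n : ℕ, N ≤ n → ∀ β : ℝ,
      (n : ℝ) ^ c ≤ β → β ≤ (n : ℝ) ^ (2 - c) →
      c₁ * Real.sqrt (Real.log β) ≤
          (∫ t in Set.Icc (-(Real.sqrt (2 * Real.log n - Real.log β - ω β)))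
              (Real.sqrt (2 * Real.log n - Real.log β - ω β)),
            Real.exp (-C * n * β ^ (-(3 : ℝ) / 2) * t ^ 2 * Real.exp (-t ^ 2 / 2))) ∧
      (∫ t in Set.Icc (-(Real.sqrt (2 * Real.log n - Real.log β - ω β)))
          (Real.sqrt (2 * Real.log n - Real.log β - ω β)),
        Real.exp (-C * n * β ^ (-(3 : ℝ) / 2) * t ^ 2 * Real.exp (-t ^ 2 / 2))) ≤
        c₂ * Real.sqrt (Real.log β) :=
  integral_exp_At_over_T_general C hC c hc0 hc1 ω hω₂
end

section
/- For every real C > 0, every integer n ≥ 1, and every real β > 1 with 2·log n − 3·log β ≥ 0, setting s = √(2·log n − 3·log β), one has ∫_{−s}^{s} exp(−C·n·β^{−3/2}·t²·e^{−t²/2}) dt ≤ √(π/C). -/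
open MeasureTheory Real Set

/-- For `C > 0`, `n ≥ 1`, `β > 1` with `2 log n − 3 log β ≥ 0` and
`s = √(2 log n − 3 log β)`, one has
`∫_{−s}^{s} exp(−C·n·β^(−3/2)·t²·e^(−t²/2)) dt ≤ √(π/C)`. -/
theorem integral_exp_At_over_Tprime_le (C : ℝ) (hC : 0 < C) (n : ℕ) (hn : 1 ≤ n)
    (β : ℝ) (hβ : 1 < β) (h : 0 ≤ 2 * Real.log n - 3 * Real.log β) :
    (∫ t in Set.Icc (-(Real.sqrt (2 * Real.log n - 3 * Real.log β)))
        (Real.sqrt (2 * Real.log n - 3 * Real.log β)),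
      Real.exp (-C * n * β ^ (-(3 : ℝ) / 2) * t ^ 2 * Real.exp (-t ^ 2 / 2))) ≤
      Real.sqrt (Real.pi / C) := by
  set s : ℝ := Real.sqrt (2 * Real.log n - 3 * Real.log β) with hs
  have hβ0 : (0 : ℝ) < β := lt_trans one_pos hβ
  have hn0 : (0 : ℝ) < n := by exact_mod_cast Nat.lt_of_lt_of_le Nat.zero_lt_one hn
  have hs2 : s ^ 2 = 2 * Real.log n - 3 * Real.log β := Real.sq_sqrt h
  -- key pointwise bound
  have key : ∀ t ∈ Set.Icc (-s) s,
      Real.exp (-C * n * β ^ (-(3 : ℝ) / 2) * t ^ 2 * Real.exp (-t ^ 2 / 2))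
        ≤ Real.exp (-C * t ^ 2) := by
    intro t ht
    rw [Real.exp_le_exp]
    have ht2 : t ^ 2 ≤ s ^ 2 := sq_le_sq' ht.1 ht.2
    have hexp : Real.exp (-s ^ 2 / 2) ≤ Real.exp (-t ^ 2 / 2) := by
      apply Real.exp_le_exp.2
      linarith
    have hval : (n : ℝ) * β ^ (-(3 : ℝ) / 2) * Real.exp (-s ^ 2 / 2) = 1 := by
      rw [hs2, Real.rpow_def_of_pos hβ0]
      rw [show (-(2 * Real.log n - 3 * Real.log β) / 2) =
        Real.log β * ((3:ℝ)/2) + (- Real.log n) by ring,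
        Real.exp_add, show Real.log β * (-(3:ℝ)/2) = -(Real.log β * ((3:ℝ)/2)) by ring,
        Real.exp_neg, Real.exp_neg, Real.exp_log hn0]
      field_simp
    have h1 : (1 : ℝ) ≤ (n : ℝ) * β ^ (-(3 : ℝ) / 2) * Real.exp (-t ^ 2 / 2) := by
      rw [← hval]
      have hpos : (0:ℝ) ≤ (n : ℝ) * β ^ (-(3 : ℝ) / 2) :=
        mul_nonneg hn0.le (Real.rpow_nonneg hβ0.le _)
      exact mul_le_mul_of_nonneg_left hexp hpos
    nlinarith [sq_nonneg t, mul_le_mul_of_nonneg_left h1 (mul_nonneg hC.le (sq_nonneg t))]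
  have hcont : Continuous fun t : ℝ =>
      Real.exp (-C * n * β ^ (-(3 : ℝ) / 2) * t ^ 2 * Real.exp (-t ^ 2 / 2)) := by
    fun_prop
  have hcont2 : Continuous fun t : ℝ => Real.exp (-C * t ^ 2) := by fun_prop
  have hint2 : Integrable fun t : ℝ => Real.exp (-C * t ^ 2) :=
    integrable_exp_neg_mul_sq hC
  calc
    (∫ t in Set.Icc (-s) s,
        Real.exp (-C * n * β ^ (-(3 : ℝ) / 2) * t ^ 2 * Real.exp (-t ^ 2 / 2)))
      ≤ ∫ t in Set.Icc (-s) s, Real.exp (-C * t ^ 2) := by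
        apply setIntegral_mono_on
          (hcont.continuousOn.integrableOn_compact isCompact_Icc)
          (hint2.integrableOn) measurableSet_Icc key
    _ ≤ ∫ t : ℝ, Real.exp (-C * t ^ 2) :=
        setIntegral_le_integral hint2
          (Filter.Eventually.of_forall fun t => (Real.exp_pos _).le)
    _ = Real.sqrt (Real.pi / C) := integral_gaussian C
end
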